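/- For every Logical Algorithms state σ_LA and every normalized CHR execution state σ = ⟨∅,S,true,T⟩_n of the translated program T(P) with σ_LA = chrToLa(σ): there exists an LA transition σ_LA →_P σ'_LA if and only if there exists an ω_p transition σ →_{T(P)} σ' firing a non-implied rule instance such that σ'_LA = chrToLa(σ'). -/

import Mathlib

namespace LA2CHR

/-- Mode indicators: positively asserted (`p`), negatively asserted (`n`), or both (`b`). -/
inductive Mode : Type
  | p | n | b
deriving DecidableEq

/-- CHR constraints of the translated program `T(P)`: for each ground user-defined
LA atom `a`, `raw a` is the CHR constraint `a(X̄)`, `rawDel a` is `del(a(X̄))`, and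
`rep a m` is the representation constraint `a_r(X̄, m)` with mode indicator `m`. -/
inductive TC (α : Type) : Type
  | raw : α → TC α
  | rawDel : α → TC α
  | rep : α → Mode → TC α
deriving DecidableEq

/-- Ground Logical Algorithms assertions: positive (`pos a` is `a`) or
negative (`del a` is `del(a)`). -/
inductive LAAtom (α : Type) : Type
  | pos : α → LAAtom α
  | del : α → LAAtom α
deriving DecidableEq

/-- A ground instance of a Logical Algorithms rule, with the comparison antecedents
already evaluated away: a ground instance belongs to the program iff its comparisons
are true.  `posA` are the (distinct) positive user-defined ground antecedents, `negA`
the atoms of the negative (`del`) antecedents, `concl` the instantiated conclusion and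
`prio` the instantiated rule priority. -/
structure Inst (α : Type) where
  prio : ℕ
  posA : Finset α
  negA : Finset α
  concl : Finset (LAAtom α)

variable {α : Type}

/-- Applicability of a ground rule instance of `P` in an LA state
(the priority condition is not included). -/
def LAApplicable (P : Set (Inst α)) (σ : Set (LAAtom α)) (ι : Inst α) : Prop :=
  ι ∈ P ∧ (∀ a ∈ ι.posA, LAAtom.pos a ∈ σ ∧ LAAtom.del a ∉ σ) ∧
    (∀ a ∈ ι.negA, LAAtom.del a ∈ σ) ∧ ¬ ↑ι.concl ⊆ σ

/-- The `Apply` transition of Logical Algorithms: a highest-priority applicable ground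
rule instance whose conclusion is not yet contained in the state fires. -/
def LAStep (P : Set (Inst α)) (σ σ' : Set (LAAtom α)) : Prop :=
  ∃ ι, LAApplicable P σ ι ∧ σ' = σ ∪ ↑ι.concl ∧
    ∀ ι', LAApplicable P σ ι' → ι.prio ≤ ι'.prio

/-- Names of the rules of the translated CHR^rp program `T(P)`: the six
set/deletion-semantics rule schemas (for all user-defined predicates at once,
instantiated per ground atom), and one propagation rule per ground LA rule instance
(the ground collapse of the rules `r_ρ`). -/
inductive RuleTag (α : Type) : Type
  | keepPos | mergePos | newPos | keepNeg | mergeNeg | newNeg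
  | inst : Inst α → RuleTag α

/-- Rule priorities of `T(P)`: the update rules have priority 1, the rules creating a
fresh representation have priority 2, and the translation of an LA rule of priority
`p` has priority `p + 2`. -/
def RuleTag.prio : RuleTag α → ℕ
  | .keepPos => 1
  | .mergePos => 1
  | .keepNeg => 1
  | .mergeNeg => 1
  | .newPos => 2
  | .newNeg => 2
  | .inst ι => ι.prio + 2

/-- CHR^rp execution states `⟨G, S, true, T⟩_n`: goal, CHR constraint store of
identified constraints, propagation history (recording a rule together with the set of
identified constraints it fired on) and next free identifier.  As the translated
program has no built-in tell constraints, the built-in store is always `true` and is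
omitted. -/
structure CState (α : Type) where
  goal : Multiset (TC α)
  store : Set (TC α × ℕ)
  hist : Set (RuleTag α × Set (TC α × ℕ))
  next : ℕ

/-- Conclusion atoms as CHR constraints. -/
def toTC : LAAtom α → TC α
  | .pos a => .raw a
  | .del a => .rawDel a

/-- `Fires P χ t H R B`: rule `t` of `T(P)` has an instance in state `χ` matching the
set `H` of identified stored head constraints, of which the ones in `R` are removed,
with instantiated body `B`.  This comprises all conditions of the ω_p `Apply`
transition except the empty-goal, propagation-history and priority conditions. -/
inductive Fires (P : Set (Inst α)) (χ : CState α) :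
    RuleTag α → Set (TC α × ℕ) → Set (TC α × ℕ) → Multiset (TC α) → Prop
  | keepPos (a : α) (m : Mode) (i j : ℕ) : m ≠ Mode.n →
      (TC.rep a m, i) ∈ χ.store → (TC.raw a, j) ∈ χ.store →
      Fires P χ .keepPos {(TC.rep a m, i), (TC.raw a, j)} {(TC.raw a, j)} 0
  | mergePos (a : α) (i j : ℕ) :
      (TC.rep a Mode.n, i) ∈ χ.store → (TC.raw a, j) ∈ χ.store →
      Fires P χ .mergePos {(TC.rep a Mode.n, i), (TC.raw a, j)}
        {(TC.rep a Mode.n, i), (TC.raw a, j)} {TC.rep a Mode.b}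
  | newPos (a : α) (j : ℕ) : (TC.raw a, j) ∈ χ.store →
      Fires P χ .newPos {(TC.raw a, j)} {(TC.raw a, j)} {TC.rep a Mode.p}
  | keepNeg (a : α) (m : Mode) (i j : ℕ) : m ≠ Mode.p →
      (TC.rep a m, i) ∈ χ.store → (TC.rawDel a, j) ∈ χ.store →
      Fires P χ .keepNeg {(TC.rep a m, i), (TC.rawDel a, j)} {(TC.rawDel a, j)} 0
  | mergeNeg (a : α) (i j : ℕ) :
      (TC.rep a Mode.p, i) ∈ χ.store → (TC.rawDel a, j) ∈ χ.store →
      Fires P χ .mergeNeg {(TC.rep a Mode.p, i), (TC.rawDel a, j)}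
        {(TC.rep a Mode.p, i), (TC.rawDel a, j)} {TC.rep a Mode.b}
  | newNeg (a : α) (j : ℕ) : (TC.rawDel a, j) ∈ χ.store →
      Fires P χ .newNeg {(TC.rawDel a, j)} {(TC.rawDel a, j)} {TC.rep a Mode.n}
  | inst (ι : Inst α) (fp fn : α → ℕ) (fm : α → Mode) : ι ∈ P →
      (∀ a ∈ ι.posA, (TC.rep a Mode.p, fp a) ∈ χ.store) →
      (∀ a ∈ ι.negA, fm a ≠ Mode.p ∧ (TC.rep a (fm a), fn a) ∈ χ.store) →
      Fires P χ (.inst ι)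
        ((fun a => (TC.rep a Mode.p, fp a)) '' ↑ι.posA ∪
          (fun a => (TC.rep a (fm a), fn a)) '' ↑ι.negA)
        ∅ (Multiset.map toTC ι.concl.val)

/-- Transition labels: `Introduce`, or `Apply` of a given rule of `T(P)`. -/
inductive Lab (α : Type) : Type
  | intro : Lab α
  | apply : RuleTag α → Lab α

variable [DecidableEq α]

/-- The transitions of the priority semantics ω_p for the translated program `T(P)`:
`Introduce` moves a constraint from the goal to the store with a fresh identifier;
`Apply` (possible only when the goal is empty) fires an instance of a rule whose
history tuple is not yet recorded and such that no fireable rule instance has a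
strictly higher priority. -/
inductive Step (P : Set (Inst α)) : CState α → Lab α → CState α → Prop
  | intro (χ : CState α) (c : TC α) : c ∈ χ.goal →
      Step P χ .intro ⟨χ.goal.erase c, insert (c, χ.next) χ.store, χ.hist, χ.next + 1⟩
  | apply (χ : CState α) (t : RuleTag α) (H R : Set (TC α × ℕ)) (B : Multiset (TC α)) :
      χ.goal = 0 → Fires P χ t H R B → (t, H) ∉ χ.hist →
      (∀ t' H' R' B', Fires P χ t' H' R' B' → (t', H') ∉ χ.hist →
        RuleTag.prio t ≤ RuleTag.prio t') →
      Step P χ (.apply t) ⟨B, χ.store \ R, insert (t, H) χ.hist, χ.next⟩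

/-- Some ω_p transition. -/
def StepAny (P : Set (Inst α)) (χ χ' : CState α) : Prop := ∃ l, Step P χ l χ'

/-- An ω_p transition that is an `Introduce` or fires a rule of priority 1 or 2. -/
def Step2 (P : Set (Inst α)) (χ χ' : CState α) : Prop :=
  ∃ l, Step P χ l χ' ∧ ∀ t, l = Lab.apply t → RuleTag.prio t ≤ 2

/-- Membership in `A = G ∪ chr(S)`. -/
def memA (χ : CState α) (c : TC α) : Prop := c ∈ χ.goal ∨ ∃ i, (c, i) ∈ χ.store

/-- The mapping from (reachable) CHR^rp execution states of `T(P)` to LA states. -/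
def chrToLa (χ : CState α) : Set (LAAtom α) :=
  {x | (∃ a, x = LAAtom.pos a ∧
          (memA χ (TC.raw a) ∨ ∃ m, m ≠ Mode.n ∧ memA χ (TC.rep a m))) ∨
       (∃ a, x = LAAtom.del a ∧
          (memA χ (TC.rawDel a) ∨ ∃ m, m ≠ Mode.p ∧ memA χ (TC.rep a m)))}

/-- Initial states `⟨G, ∅, true, ∅⟩_n` where the goal `G` contains only constraints of
the forms `a(X̄)` and `del(a(X̄))` (no `a_r` constraints). -/
def Init (χ : CState α) : Prop :=
  (∀ c ∈ χ.goal, ∃ a, c = TC.raw a ∨ c = TC.rawDel a) ∧ χ.store = ∅ ∧ χ.hist = ∅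

/-- Reachability (w.r.t. ω_p and program `T(P)`) from an initial state. -/
def Reachable (P : Set (Inst α)) (χ : CState α) : Prop :=
  ∃ χ₀, Init χ₀ ∧ Relation.ReflTransGen (StepAny P) χ₀ χ

/-- Pre-normal form: empty goal, the store contains only `a_r(X̄, M)` constraints, and
two stored representations of the same atom have the same identifier. -/
def PreNormal (χ : CState α) : Prop :=
  χ.goal = 0 ∧ (∀ c ∈ χ.store, ∃ a m, c.1 = TC.rep a m) ∧
  ∀ a m₁ m₂ i₁ i₂, (TC.rep a m₁, i₁) ∈ χ.store → (TC.rep a m₂, i₂) ∈ χ.store → i₁ = i₂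

/-- A rule instance is implied in a state `σ` if its conclusion is contained in
`chrToLa σ`. -/
def Implied (ι : Inst α) (χ : CState α) : Prop := ↑ι.concl ⊆ chrToLa χ

end LA2CHR

namespace LA2CHR

variable {α : Type} [DecidableEq α]

/-- A pre-normalized CHR execution state is in normal form if it is a final state or
some ω_p transition from it fires a non-implied rule instance. -/
def Normalized (P : Set (Inst α)) (χ : CState α) : Prop :=
  PreNormal χ ∧
    ((∀ l χ', ¬ Step P χ l χ') ∨
      ∃ ι χ', Step P χ (Lab.apply (RuleTag.inst ι)) χ' ∧ ¬ Implied ι χ)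

end LA2CHR

/-!
Along every ω_p derivation from an initial state three facts persist: every atom has at most
one stored representation (a fresh `a_r` is created only when no priority-1 rule can merge the
raw constraint into an existing one); a raw constraint that took part in a firing is gone for
good (identifiers are fresh), so the history never blocks a priority-1 rule; and every translated
rule instance in the history is implied, since `chrToLa` only grows. In a pre-normal state
`chrToLa` can then be read off the representations, so a translated rule instance fires without
being blocked by the history and is non-implied exactly when the LA rule instance is applicable,
and its firing adds exactly its conclusion. Priorities `p + 2` compare like LA priorities.
-/

namespace LA2CHR

variable {α : Type} {P : Set (Inst α)} {χ : CState α}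

def TC.asserts : TC α → Set (LAAtom α)
  | .raw a => {.pos a}
  | .rawDel a => {.del a}
  | .rep a .p => {.pos a}
  | .rep a .n => {.del a}
  | .rep a .b => {.pos a, .del a}

@[simp]
lemma TC.asserts_raw (a : α) : (TC.raw a).asserts = {.pos a} := rfl

@[simp]
lemma TC.asserts_rawDel (a : α) : (TC.rawDel a).asserts = {.del a} := rfl

@[simp]
lemma TC.pos_mem_asserts_rep {a b : α} {m : Mode} :
    LAAtom.pos a ∈ (TC.rep b m).asserts ↔ b = a ∧ m ≠ .n := by
  cases m <;> simp [TC.asserts, eq_comm]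

@[simp]
lemma TC.del_mem_asserts_rep {a b : α} {m : Mode} :
    LAAtom.del a ∈ (TC.rep b m).asserts ↔ b = a ∧ m ≠ .p := by
  cases m <;> simp [TC.asserts, eq_comm]

@[simp]
lemma asserts_toTC (x : LAAtom α) : (toTC x).asserts = {x} := by
  cases x <;> rfl

lemma mem_chrToLa_iff {x : LAAtom α} :
    x ∈ chrToLa χ ↔ ∃ c, memA χ c ∧ x ∈ c.asserts := by
  constructor
  · rintro (⟨a, rfl, h | ⟨m, hm, h⟩⟩ | ⟨a, rfl, h | ⟨m, hm, h⟩⟩)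
    · exact ⟨_, h, rfl⟩
    · exact ⟨_, h, by simpa using hm⟩
    · exact ⟨_, h, rfl⟩
    · exact ⟨_, h, by simpa using hm⟩
  · rintro ⟨c, hc, hx⟩
    rcases c with a | a | ⟨a, m⟩
    · obtain rfl : x = .pos a := hx
      exact Or.inl ⟨a, rfl, Or.inl hc⟩
    · obtain rfl : x = .del a := hx
      exact Or.inr ⟨a, rfl, Or.inl hc⟩
    · rcases x with b | b
      · obtain ⟨rfl, hm⟩ := TC.pos_mem_asserts_rep.1 hx
        exact Or.inl ⟨a, rfl, Or.inr ⟨m, hm, hc⟩⟩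
      · obtain ⟨rfl, hm⟩ := TC.del_mem_asserts_rep.1 hx
        exact Or.inr ⟨a, rfl, Or.inr ⟨m, hm, hc⟩⟩

lemma asserts_subset_chrToLa {c : TC α} (h : memA χ c) :
    c.asserts ⊆ chrToLa χ :=
  fun _ hx => mem_chrToLa_iff.2 ⟨c, h, hx⟩

lemma chrToLa_subset_of_forall {χ' : CState α}
    (h : ∀ c, memA χ c → c.asserts ⊆ chrToLa χ') : chrToLa χ ⊆ chrToLa χ' := by
  intro x hx
  obtain ⟨c, hc, hxc⟩ := mem_chrToLa_iff.1 hx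
  exact h c hc hxc

lemma memA_iff_of_goal_eq_zero (hg : χ.goal = 0) {c : TC α} :
    memA χ c ↔ ∃ i, (c, i) ∈ χ.store := by
  simp [memA, hg]

lemma mem_chrToLa_iff_of_preNormal (hpn : PreNormal χ) {x : LAAtom α} :
    x ∈ chrToLa χ ↔ ∃ a m i, (TC.rep a m, i) ∈ χ.store ∧ x ∈ (TC.rep a m).asserts := by
  simp only [mem_chrToLa_iff, memA_iff_of_goal_eq_zero hpn.1]
  constructor
  · rintro ⟨c, ⟨i, hi⟩, hx⟩
    obtain ⟨a, m, hc⟩ := hpn.2.1 _ hi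
    subst hc
    exact ⟨a, m, i, hi, hx⟩
  · rintro ⟨a, m, i, hi, hx⟩
    exact ⟨_, ⟨i, hi⟩, hx⟩

section Fires

variable {t : RuleTag α} {H R : Set (TC α × ℕ)} {B : Multiset (TC α)}

lemma Fires.subset_store (hf : Fires P χ t H R B) : H ⊆ χ.store := by
  cases hf with
  | inst ι fp fn fm _ hpos hneg =>
    rintro _ (⟨a, ha, rfl⟩ | ⟨a, ha, rfl⟩)
    exacts [hpos a ha, (hneg a ha).2]
  | _ => simp_all [Set.insert_subset_iff]

lemma Fires.exists_rep_of_notMem_removed (hf : Fires P χ t H R B) {p : TC α × ℕ}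
    (hH : p ∈ H) (hR : p ∉ R) : ∃ a m, p.1 = TC.rep a m := by
  cases hf <;> aesop

lemma Fires.asserts_subset_of_mem_removed (hf : Fires P χ t H R B) {p : TC α × ℕ}
    (hp : p ∈ R) (hist' : Set (RuleTag α × Set (TC α × ℕ))) (next' : ℕ) :
    p.1.asserts ⊆ chrToLa ⟨B, χ.store \ R, hist', next'⟩ := by
  cases hf with
  | keepPos a m i j hm hi _ =>
    obtain rfl : p = (TC.raw a, j) := hp
    refine subset_trans ?_ (asserts_subset_chrToLa (c := TC.rep a m) (Or.inr ⟨i, hi, by simp⟩))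
    simpa using hm
  | keepNeg a m i j hm hi _ =>
    obtain rfl : p = (TC.rawDel a, j) := hp
    refine subset_trans ?_ (asserts_subset_chrToLa (c := TC.rep a m) (Or.inr ⟨i, hi, by simp⟩))
    simpa using hm
  | mergePos a i j =>
    refine subset_trans ?_ (asserts_subset_chrToLa (c := TC.rep a .b) (Or.inl (by simp)))
    rcases hp with rfl | rfl <;> simp [TC.asserts]
  | mergeNeg a i j =>
    refine subset_trans ?_ (asserts_subset_chrToLa (c := TC.rep a .b) (Or.inl (by simp)))
    rcases hp with rfl | rfl <;> simp [TC.asserts]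
  | newPos a j =>
    obtain rfl : p = (TC.raw a, j) := hp
    exact asserts_subset_chrToLa (c := TC.rep a .p) (Or.inl (by simp))
  | newNeg a j =>
    obtain rfl : p = (TC.rawDel a, j) := hp
    exact asserts_subset_chrToLa (c := TC.rep a .n) (Or.inl (by simp))
  | inst => exact absurd hp (Set.notMem_empty p)

lemma Fires.chrToLa_subset (hf : Fires P χ t H R B) (hg : χ.goal = 0)
    (hist' : Set (RuleTag α × Set (TC α × ℕ))) (next' : ℕ) :
    chrToLa χ ⊆ chrToLa ⟨B, χ.store \ R, hist', next'⟩ := by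
  refine chrToLa_subset_of_forall fun c hc => ?_
  obtain ⟨i, hi⟩ := (memA_iff_of_goal_eq_zero hg).1 hc
  by_cases hR : (c, i) ∈ R
  · exact hf.asserts_subset_of_mem_removed hR _ _
  · exact asserts_subset_chrToLa (Or.inr ⟨i, hi, hR⟩)

lemma Fires.implied_of_inst {ι : Inst α} (hf : Fires P χ (.inst ι) H R B)
    (store' : Set (TC α × ℕ)) (hist' : Set (RuleTag α × Set (TC α × ℕ))) (next' : ℕ) :
    Implied ι ⟨B, store', hist', next'⟩ := by
  cases hf
  intro x hx
  exact asserts_subset_chrToLa (c := toTC x) (Or.inl (Multiset.mem_map_of_mem _ hx)) (by simp)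

lemma Fires.chrToLa_eq_of_inst {ι : Inst α} (hf : Fires P χ (.inst ι) H R B)
    (hg : χ.goal = 0) (hist' : Set (RuleTag α × Set (TC α × ℕ))) (next' : ℕ) :
    chrToLa ⟨B, χ.store \ R, hist', next'⟩ = chrToLa χ ∪ ↑ι.concl := by
  cases hf
  ext x
  simp only [Set.mem_union, mem_chrToLa_iff, memA, hg, Set.sdiff_empty]
  simp [or_and_right, exists_or, or_comm]

end Fires

def Fireable (P : Set (Inst α)) (χ : CState α) (t : RuleTag α) : Prop :=
  ∃ H R B, Fires P χ t H R B ∧ (t, H) ∉ χ.hist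

structure Invariant (χ : CState α) : Prop where
  store_lt_next : ∀ p ∈ χ.store, p.2 < χ.next
  hist_lt_next : ∀ t H, (t, H) ∈ χ.hist → ∀ p ∈ H, p.2 < χ.next
  rep_of_mem_hist : ∀ t H, (t, H) ∈ χ.hist → ∀ p ∈ H, p ∈ χ.store → ∃ a m, p.1 = TC.rep a m
  rep_unique : ∀ a m₁ m₂ i₁ i₂, (TC.rep a m₁, i₁) ∈ χ.store → (TC.rep a m₂, i₂) ∈ χ.store →
    m₁ = m₂ ∧ i₁ = i₂
  goal_rep : ∀ a m, TC.rep a m ∈ χ.goal →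
    χ.goal = {TC.rep a m} ∧ ∀ m' i, (TC.rep a m', i) ∉ χ.store
  implied_of_mem_hist : ∀ ι H, (RuleTag.inst ι, H) ∈ χ.hist → Implied ι χ

lemma Invariant.notMem_hist (hI : Invariant χ) {t : RuleTag α} {H : Set (TC α × ℕ)}
    {c : TC α} {j : ℕ} (hH : (c, j) ∈ H) (hs : (c, j) ∈ χ.store)
    (hc : ∀ a m, c ≠ TC.rep a m) : (t, H) ∉ χ.hist := fun hh =>
  let ⟨a, m, he⟩ := hI.rep_of_mem_hist t H hh _ hH hs
  hc a m he

lemma Invariant.fireable_prio_one_of_raw (hI : Invariant χ) {a : α} {m : Mode} {i j : ℕ}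
    (hs : (TC.rep a m, i) ∈ χ.store) (hr : (TC.raw a, j) ∈ χ.store) :
    ∃ t, Fireable P χ t ∧ t.prio = 1 := by
  have hH : ∀ t, (t, ({(TC.rep a m, i), (TC.raw a, j)} : Set (TC α × ℕ))) ∉ χ.hist :=
    fun _ => hI.notMem_hist (by simp) hr (by simp)
  by_cases hm : m = .n
  · subst hm
    exact ⟨_, ⟨_, _, _, .mergePos a i j hs hr, hH _⟩, rfl⟩
  · exact ⟨_, ⟨_, _, _, .keepPos a m i j hm hs hr, hH _⟩, rfl⟩

lemma Invariant.fireable_prio_one_of_rawDel (hI : Invariant χ) {a : α} {m : Mode} {i j : ℕ}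
    (hs : (TC.rep a m, i) ∈ χ.store) (hr : (TC.rawDel a, j) ∈ χ.store) :
    ∃ t, Fireable P χ t ∧ t.prio = 1 := by
  have hH : ∀ t, (t, ({(TC.rep a m, i), (TC.rawDel a, j)} : Set (TC α × ℕ))) ∉ χ.hist :=
    fun _ => hI.notMem_hist (by simp) hr (by simp)
  by_cases hm : m = .p
  · subst hm
    exact ⟨_, ⟨_, _, _, .mergeNeg a i j hs hr, hH _⟩, rfl⟩
  · exact ⟨_, ⟨_, _, _, .keepNeg a m i j hm hs hr, hH _⟩, rfl⟩

lemma Invariant.goal_rep_of_fires (hI : Invariant χ) {t : RuleTag α} {H R : Set (TC α × ℕ)}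
    {B : Multiset (TC α)} (hf : Fires P χ t H R B)
    (hmin : ∀ t', Fireable P χ t' → t.prio ≤ t'.prio) {a : α} {m : Mode}
    (hm : TC.rep a m ∈ B) : B = {TC.rep a m} ∧ ∀ m' i, (TC.rep a m', i) ∉ χ.store \ R := by
  cases hf with
  | keepPos | keepNeg => simp at hm
  | mergePos b i j hi =>
    obtain ⟨rfl, rfl⟩ : a = b ∧ m = .b := by simpa using hm
    refine ⟨rfl, fun m' i' hs => hs.2 ?_⟩
    obtain ⟨rfl, rfl⟩ := hI.rep_unique a m' .n i' i hs.1 hi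
    exact Or.inl rfl
  | mergeNeg b i j hi =>
    obtain ⟨rfl, rfl⟩ : a = b ∧ m = .b := by simpa using hm
    refine ⟨rfl, fun m' i' hs => hs.2 ?_⟩
    obtain ⟨rfl, rfl⟩ := hI.rep_unique a m' .p i' i hs.1 hi
    exact Or.inl rfl
  | newPos b j hr =>
    obtain ⟨rfl, rfl⟩ : a = b ∧ m = .p := by simpa using hm
    refine ⟨rfl, fun m' i hs => ?_⟩
    obtain ⟨t', ht', hprio⟩ := hI.fireable_prio_one_of_raw hs.1 hr
    have := hprio ▸ hmin t' ht'
    simp [RuleTag.prio] at this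
  | newNeg b j hr =>
    obtain ⟨rfl, rfl⟩ : a = b ∧ m = .n := by simpa using hm
    refine ⟨rfl, fun m' i hs => ?_⟩
    obtain ⟨t', ht', hprio⟩ := hI.fireable_prio_one_of_rawDel hs.1 hr
    have := hprio ▸ hmin t' ht'
    simp [RuleTag.prio] at this
  | inst ι =>
    obtain ⟨x, -, hx⟩ := Multiset.mem_map.1 hm
    cases x <;> cases hx

lemma Invariant.of_init (h : Init χ) : Invariant χ := by
  obtain ⟨hg, hs, hh⟩ := h
  refine ⟨?_, ?_, ?_, ?_, fun a m hm => ?_, ?_⟩ <;> simp_all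
  obtain ⟨b, hb | hb⟩ := hg _ hm <;> cases hb

lemma Invariant.apply (hI : Invariant χ) {t : RuleTag α} {H R : Set (TC α × ℕ)}
    {B : Multiset (TC α)} (hg : χ.goal = 0) (hf : Fires P χ t H R B)
    (hmin : ∀ t', Fireable P χ t' → t.prio ≤ t'.prio) :
    Invariant ⟨B, χ.store \ R, insert (t, H) χ.hist, χ.next⟩ where
  store_lt_next p hp := hI.store_lt_next p hp.1
  hist_lt_next := by
    rintro t' H' (he | hH') p hp
    · obtain ⟨rfl, rfl⟩ := Prod.mk.inj he
      exact hI.store_lt_next p (hf.subset_store hp)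
    · exact hI.hist_lt_next t' H' hH' p hp
  rep_of_mem_hist := by
    rintro t' H' (he | hH') p hp hs
    · obtain ⟨rfl, rfl⟩ := Prod.mk.inj he
      exact hf.exists_rep_of_notMem_removed hp hs.2
    · exact hI.rep_of_mem_hist t' H' hH' p hp hs.1
  rep_unique a m₁ m₂ i₁ i₂ h₁ h₂ := hI.rep_unique a m₁ m₂ i₁ i₂ h₁.1 h₂.1
  goal_rep a m hm := hI.goal_rep_of_fires hf hmin hm
  implied_of_mem_hist := by
    rintro ι H' (he | hH')
    · obtain ⟨rfl, rfl⟩ := Prod.mk.inj he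
      exact hf.implied_of_inst _ _ _
    · exact (hI.implied_of_mem_hist ι H' hH').trans (hf.chrToLa_subset hg _ _)

lemma del_mem_chrToLa_iff_of_preNormal (hpn : PreNormal χ) {a : α} :
    LAAtom.del a ∈ chrToLa χ ↔ ∃ m i, m ≠ .p ∧ (TC.rep a m, i) ∈ χ.store := by
  simp only [mem_chrToLa_iff_of_preNormal hpn, TC.del_mem_asserts_rep]
  constructor
  · rintro ⟨_, m, i, hi, rfl, hm⟩
    exact ⟨m, i, hm, hi⟩
  · rintro ⟨m, i, hm, hi⟩
    exact ⟨a, m, i, hi, rfl, hm⟩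

lemma Invariant.pos_mem_and_del_not_mem_iff (hI : Invariant χ) (hpn : PreNormal χ) {a : α} :
    LAAtom.pos a ∈ chrToLa χ ∧ LAAtom.del a ∉ chrToLa χ ↔ ∃ i, (TC.rep a .p, i) ∈ χ.store := by
  rw [del_mem_chrToLa_iff_of_preNormal hpn]
  simp only [mem_chrToLa_iff_of_preNormal hpn, TC.pos_mem_asserts_rep]
  constructor
  · rintro ⟨⟨_, m, i, hi, rfl, hm⟩, hdel⟩
    by_cases hmp : m = .p
    · exact ⟨i, hmp ▸ hi⟩
    · exact absurd ⟨m, i, hmp, hi⟩ hdel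
  · rintro ⟨i, hi⟩
    refine ⟨⟨a, .p, i, hi, rfl, by decide⟩, ?_⟩
    rintro ⟨m, i', hm, hi'⟩
    exact hm (hI.rep_unique a m .p i' i hi' hi).1

lemma Invariant.laApplicable_iff (hI : Invariant χ) (hpn : PreNormal χ) {ι : Inst α} :
    LAApplicable P (chrToLa χ) ι ↔ Fireable P χ (.inst ι) ∧ ¬ Implied ι χ := by
  constructor
  · rintro ⟨hP, hpos, hneg, hni⟩
    have hpos' := fun a ha => (hI.pos_mem_and_del_not_mem_iff hpn).1 (hpos a ha)
    have hneg' := fun a ha => (del_mem_chrToLa_iff_of_preNormal hpn).1 (hneg a ha)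
    have : Nonempty Mode := ⟨.p⟩
    choose! fp hfp using hpos'
    choose! fm fn hfm using hneg'
    exact ⟨⟨_, _, _, .inst ι fp fn fm hP hfp hfm,
      fun hh => hni (hI.implied_of_mem_hist ι _ hh)⟩, hni⟩
  · rintro ⟨⟨H, R, B, hf, -⟩, hni⟩
    cases hf with
    | inst _ fp fn fm hP hpos hneg =>
      refine ⟨hP, fun a ha => (hI.pos_mem_and_del_not_mem_iff hpn).2 ⟨fp a, hpos a ha⟩,
        fun a ha => ?_, hni⟩
      obtain ⟨hm, hs⟩ := hneg a ha
      exact (del_mem_chrToLa_iff_of_preNormal hpn).2 ⟨fm a, fn a, hm, hs⟩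

section Step

variable [DecidableEq α]

lemma chrToLa_subset_introduce (c : TC α) (hist' : Set (RuleTag α × Set (TC α × ℕ)))
    (next' : ℕ) :
    chrToLa χ ⊆ chrToLa ⟨χ.goal.erase c, insert (c, χ.next) χ.store, hist', next'⟩ := by
  refine chrToLa_subset_of_forall fun d hd => asserts_subset_chrToLa ?_
  rcases hd with hd | ⟨i, hi⟩
  · by_cases hdc : d = c
    · exact Or.inr ⟨χ.next, hdc ▸ Set.mem_insert _ _⟩
    · exact Or.inl ((Multiset.mem_erase_of_ne hdc).2 hd)
  · exact Or.inr ⟨i, Set.mem_insert_of_mem _ hi⟩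

lemma Invariant.intro (hI : Invariant χ) {c : TC α} (hc : c ∈ χ.goal) :
    Invariant ⟨χ.goal.erase c, insert (c, χ.next) χ.store, χ.hist, χ.next + 1⟩ where
  store_lt_next := by
    rintro p (rfl | hp)
    exacts [Nat.lt_succ_self _, Nat.lt_succ_of_lt (hI.store_lt_next p hp)]
  hist_lt_next t H hH p hp := Nat.lt_succ_of_lt (hI.hist_lt_next t H hH p hp)
  rep_of_mem_hist t H hH p hp := by
    rintro (rfl | hs)
    · exact absurd (hI.hist_lt_next t H hH _ hp) (lt_irrefl _)
    · exact hI.rep_of_mem_hist t H hH p hp hs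
  rep_unique a m₁ m₂ i₁ i₂ h₁ h₂ := by
    rcases h₁ with h₁ | h₁ <;> rcases h₂ with h₂ | h₂
    · simpa using h₁.trans h₂.symm
    · obtain ⟨rfl, -⟩ := Prod.mk.inj h₁
      exact absurd h₂ ((hI.goal_rep a m₁ hc).2 m₂ i₂)
    · obtain ⟨rfl, -⟩ := Prod.mk.inj h₂
      exact absurd h₁ ((hI.goal_rep a m₂ hc).2 m₁ i₁)
    · exact hI.rep_unique a m₁ m₂ i₁ i₂ h₁ h₂
  goal_rep a m hm := by
    have hg := (hI.goal_rep a m (Multiset.mem_of_mem_erase hm)).1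
    rw [hg, Multiset.mem_singleton] at hc
    rw [hg, hc] at hm
    simp at hm
  implied_of_mem_hist ι H hH :=
    (hI.implied_of_mem_hist ι H hH).trans (chrToLa_subset_introduce c _ _)

lemma Invariant.step (hI : Invariant χ) {χ' : CState α} {l : Lab α} (h : Step P χ l χ') :
    Invariant χ' := by
  cases h with
  | intro c hc => exact hI.intro hc
  | apply t H R B hg hf _ hmin =>
    exact hI.apply hg hf fun t' ⟨H', R', B', hf', hh'⟩ => hmin t' H' R' B' hf' hh'

lemma Reachable.invariant (h : Reachable P χ) : Invariant χ := by
  obtain ⟨χ₀, h₀, hsteps⟩ := h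
  induction hsteps with
  | refl => exact Invariant.of_init h₀
  | tail _ hstep ih => exact ih.step hstep.choose_spec

lemma Step.fireable {t : RuleTag α} {χ' : CState α} (h : Step P χ (.apply t) χ') :
    Fireable P χ t := by
  cases h with
  | apply _ H R B _ hf hh => exact ⟨H, R, B, hf, hh⟩

lemma Step.prio_le {t t' : RuleTag α} {χ' : CState α} (h : Step P χ (.apply t) χ')
    (ht' : Fireable P χ t') : t.prio ≤ t'.prio := by
  cases h with
  | apply _ _ _ _ _ _ _ hmin =>
    obtain ⟨H', R', B', hf', hh'⟩ := ht'
    exact hmin t' H' R' B' hf' hh'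

lemma Step.chrToLa_eq_of_inst {ι : Inst α} {χ' : CState α}
    (h : Step P χ (.apply (.inst ι)) χ') : chrToLa χ' = chrToLa χ ∪ ↑ι.concl := by
  cases h with
  | apply _ H R B hg hf => exact hf.chrToLa_eq_of_inst hg _ _

lemma exists_step_apply (hg : χ.goal = 0) (h : ∃ t, Fireable P χ t) :
    ∃ t χ', Step P χ (.apply t) χ' := by
  classical
  have hn : ∃ n, ∃ t, Fireable P χ t ∧ t.prio = n :=
    let ⟨t, ht⟩ := h
    ⟨t.prio, t, ht, rfl⟩
  obtain ⟨t, ⟨H, R, B, hf, hh⟩, ht⟩ := Nat.find_spec hn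
  refine ⟨t, _, .apply χ t H R B hg hf hh fun t' H' R' B' hf' hh' => ?_⟩
  exact ht ▸ Nat.find_min' hn ⟨t', ⟨H', R', B', hf', hh'⟩, rfl⟩

lemma Invariant.exists_step_inst_iff (hI : Invariant χ) (hnorm : Normalized P χ)
    {ι : Inst α} :
    (∃ χ', Step P χ (.apply (.inst ι)) χ' ∧ ¬ Implied ι χ) ↔
      LAApplicable P (chrToLa χ) ι ∧
        ∀ ι', LAApplicable P (chrToLa χ) ι' → ι.prio ≤ ι'.prio := by
  obtain ⟨hpn, hnext⟩ := hnorm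
  constructor
  · rintro ⟨χ', h, hni⟩
    refine ⟨(hI.laApplicable_iff hpn).2 ⟨h.fireable, hni⟩, fun ι' hι' => ?_⟩
    simpa [RuleTag.prio] using h.prio_le ((hI.laApplicable_iff hpn).1 hι').1
  · rintro ⟨hap, hmin⟩
    obtain ⟨⟨H, R, B, hf, hh⟩, hni⟩ := (hI.laApplicable_iff hpn).1 hap
    suffices hlow : ∀ t', Fireable P χ t' → (RuleTag.inst ι).prio ≤ t'.prio from
      ⟨_, .apply χ _ H R B hpn.1 hf hh fun t' H' R' B' hf' hh' =>
        hlow t' ⟨H', R', B', hf', hh'⟩, hni⟩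
    -- Normalization rules out an implied instance of smaller priority firing first.
    obtain hfinal | ⟨ι₀, χ₀, h₀, hni₀⟩ := hnext
    · obtain ⟨t, χ', h⟩ := exists_step_apply hpn.1 ⟨_, H, R, B, hf, hh⟩
      exact absurd h (hfinal _ _)
    · intro t' ht'
      have hap₀ := (hI.laApplicable_iff hpn).2 ⟨h₀.fireable, hni₀⟩
      calc (RuleTag.inst ι).prio ≤ (RuleTag.inst ι₀).prio := by
            simpa [RuleTag.prio] using hmin ι₀ hap₀
        _ ≤ t'.prio := h₀.prio_le ht'

end Step

end LA2CHR

open LA2CHR in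
/-- For every Logical Algorithms state `σLA` and every normalized CHR execution state
`σ = ⟨∅, S, true, T⟩_n` of the translated program `T(P)` with `σLA = chrToLa σ`:
there is an LA transition `σLA → σ'LA` if and only if there is an ω_p transition
`σ → σ'` firing a non-implied rule instance with `σ'LA = chrToLa σ'`. -/
theorem la_step_iff_nonimplied_chr_step {α : Type} [DecidableEq α]
    (P : Set (Inst α)) (σLA : Set (LAAtom α)) (χ : CState α)
    (hreach : Reachable P χ) (hnorm : Normalized P χ) (heq : chrToLa χ = σLA) :
    ∀ σ'LA : Set (LAAtom α),
      LAStep P σLA σ'LA ↔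
        ∃ ι χ', Step P χ (Lab.apply (RuleTag.inst ι)) χ' ∧ ¬ Implied ι χ ∧
          chrToLa χ' = σ'LA := by
  subst heq
  intro σ'LA
  have hstep_iff := fun ι => hreach.invariant.exists_step_inst_iff hnorm (ι := ι)
  constructor
  · rintro ⟨ι, hap, rfl, hmin⟩
    obtain ⟨χ', h, hni⟩ := (hstep_iff ι).2 ⟨hap, hmin⟩
    exact ⟨ι, χ', h, hni, h.chrToLa_eq_of_inst⟩
  · rintro ⟨ι, χ', h, hni, rfl⟩
    obtain ⟨hap, hmin⟩ := (hstep_iff ι).1 ⟨χ', h, hni⟩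
    exact ⟨ι, hap, h.chrToLa_eq_of_inst, hmin⟩
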